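/- Let φ ∈ ℂ and ς₁, ς₂ ∈ ℝ with min(|ς₁|, |ς₂|) ≥ |φ|. Then for all real ω, ((|φ|² - ω²)² + (2·Re(φ)·ω)²) / ((ς₁² + ω²)(ς₂² + ω²)) ≤ 1 whenever the denominator is nonzero. -/

import Mathlib

/-! On the imaginary axis the numerator is `|iω - φ|² |iω - φ̄|² = (|φ|² + ω²)² - (2 Im(φ) ω)²`,
hence at most `(|φ|² + ω²)²`, and `|φ| ≤ |ς_k|` bounds each factor `|φ|² + ω²` by `ς_k² + ω²`. -/

lemma Complex.sq_norm_sub_sq_add_sq_re (φ : ℂ) (ω : ℝ) :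
    (‖φ‖ ^ 2 - ω ^ 2) ^ 2 + (2 * φ.re * ω) ^ 2 = (‖φ‖ ^ 2 + ω ^ 2) ^ 2 - (2 * φ.im * ω) ^ 2 := by
  rw [Complex.sq_norm, Complex.normSq_apply]
  ring

lemma Complex.sq_norm_sub_sq_add_sq_re_le (φ : ℂ) (ω : ℝ) :
    (‖φ‖ ^ 2 - ω ^ 2) ^ 2 + (2 * φ.re * ω) ^ 2 ≤ (‖φ‖ ^ 2 + ω ^ 2) ^ 2 := by
  rw [Complex.sq_norm_sub_sq_add_sq_re]
  linarith [sq_nonneg (2 * φ.im * ω)]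

lemma sq_norm_le_sq_of_norm_le_abs {φ : ℂ} {ς : ℝ} (h : ‖φ‖ ≤ |ς|) : ‖φ‖ ^ 2 ≤ ς ^ 2 := by
  simpa only [sq_abs] using pow_le_pow_left₀ (norm_nonneg φ) h 2

theorem stmt1_general (φ : ℂ) (ς₁ ς₂ ω : ℝ)
    (h : ‖φ‖ ≤ min |ς₁| |ς₂|) :
    ((‖φ‖ ^ 2 - ω ^ 2) ^ 2 + (2 * φ.re * ω) ^ 2) /
      ((ς₁ ^ 2 + ω ^ 2) * (ς₂ ^ 2 + ω ^ 2)) ≤ 1 := by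
  have h₁ := sq_norm_le_sq_of_norm_le_abs (h.trans (min_le_left _ _))
  have h₂ := sq_norm_le_sq_of_norm_le_abs (h.trans (min_le_right _ _))
  refine div_le_one_of_le₀ ?_ (by positivity)
  calc (‖φ‖ ^ 2 - ω ^ 2) ^ 2 + (2 * φ.re * ω) ^ 2
      ≤ (‖φ‖ ^ 2 + ω ^ 2) * (‖φ‖ ^ 2 + ω ^ 2) := by
        simpa only [sq] using Complex.sq_norm_sub_sq_add_sq_re_le φ ω
    _ ≤ (ς₁ ^ 2 + ω ^ 2) * (ς₂ ^ 2 + ω ^ 2) := by gcongr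

/-- For φ ∈ ℂ and ς₁, ς₂ ∈ ℝ with min(|ς₁|, |ς₂|) ≥ |φ|, for all real ω,
`((|φ|² - ω²)² + (2 Re(φ) ω)²) / ((ς₁² + ω²)(ς₂² + ω²)) ≤ 1` whenever the denominator
is nonzero. -/
theorem stmt1 (φ : ℂ) (ς₁ ς₂ ω : ℝ)
    (h : ‖φ‖ ≤ min |ς₁| |ς₂|)
    (hden : (ς₁ ^ 2 + ω ^ 2) * (ς₂ ^ 2 + ω ^ 2) ≠ 0) :
    ((‖φ‖ ^ 2 - ω ^ 2) ^ 2 + (2 * φ.re * ω) ^ 2) /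
      ((ς₁ ^ 2 + ω ^ 2) * (ς₂ ^ 2 + ω ^ 2)) ≤ 1 :=
  stmt1_general φ ς₁ ς₂ ω h
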